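/- arXiv:math/0307158 — 2 statements merged into one kernel-verified Lean document; each statement's English description precedes it below -/
import Mathlib

section
/- Let (λ_k)_{k≥1} be a sequence of positive reals whose counting function N(r) = #{k : λ_k ≤ r} satisfies N(r) ≤ A + √r for all r > 0 and N(r) = 0 for r < λ₁, where A > 0. Then for every complex number z, the infinite product f(z) = ∏_{k≥1} (1 − z/λ_k) converges and satisfies ln|f(z)| ≤ π·√|z| + A·ln(1 + |z|/λ₁). -/
open MeasureTheory Set Filter Real Topology
open scoped ENNReal

/-!
Since `|1 - z/λ| ≤ 1 + r/λ` with `r = |z|`, it suffices to bound `∑ₖ log (1 + r/λₖ)`.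
Writing `log (1 + r/λ) = ∫_λ^∞ r / (t (t + r)) dt` and exchanging sum and integral, the sum
becomes `∫ N(t) r / (t (t + r)) dt`, where `N(t) = #{k | λₖ < t}` vanishes for `t ≤ λ₁` and is at
most `A + √t` otherwise. The `A`-part integrates to `A log (1 + r/λ₁)`, and
`∫_0^∞ √t r / (t (t + r)) dt = π √r` (an antiderivative is `2 √r arctan √(t/r)`).
The same bound gives `∑ₖ r/λₖ < ∞`, hence convergence of the product.
-/

theorem lintegral_ofReal_Ioi_of_hasDerivAt_of_nonneg {g g' : ℝ → ℝ} {a l : ℝ}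
    (hcont : ContinuousWithinAt g (Ici a) a) (hderiv : ∀ x ∈ Ioi a, HasDerivAt g (g' x) x)
    (g'_nonneg : ∀ x ∈ Ioi a, 0 ≤ g' x) (hg : Tendsto g atTop (𝓝 l)) :
    ∫⁻ x in Ioi a, ENNReal.ofReal (g' x) = ENNReal.ofReal (l - g a) := by
  rw [← ofReal_integral_eq_lintegral_ofReal
      (integrableOn_Ioi_deriv_of_nonneg hcont hderiv g'_nonneg hg)
      ((ae_restrict_iff' measurableSet_Ioi).2 (.of_forall g'_nonneg)),
    integral_Ioi_of_hasDerivAt_of_nonneg hcont hderiv g'_nonneg hg]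

section Kernel

variable {r : ℝ}

theorem lintegral_Ioi_div_mul_add (hr : 0 < r) {a : ℝ} (ha : 0 < a) :
    ∫⁻ t in Ioi a, ENNReal.ofReal (r / (t * (t + r))) = ENNReal.ofReal (log (1 + r / a)) := by
  have hderiv :
      ∀ t ∈ Ioi a, HasDerivAt (fun t ↦ log t - log (t + r)) (r / (t * (t + r))) t := by
    intro t ht
    have ht0 : 0 < t := ha.trans ht
    refine ((hasDerivAt_log ht0.ne').sub (((hasDerivAt_id t).add_const r).log
      (by simp; positivity))).congr_deriv ?_
    simp only [id]
    field_simp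
    ring
  have hcont : ContinuousWithinAt (fun t ↦ log t - log (t + r)) (Ici a) a :=
    ((continuousAt_log ha.ne').sub
      ((continuousAt_log (by positivity)).comp (by fun_prop))).continuousWithinAt
  have hlim : Tendsto (fun t ↦ log t - log (t + r)) atTop (𝓝 0) := by
    have h : Tendsto (fun t : ℝ ↦ -log (1 + r / t)) atTop (𝓝 (-log (1 + 0))) :=
      (((tendsto_const_nhds.div_atTop tendsto_id).const_add 1).log (by norm_num)).neg
    rw [add_zero, log_one, neg_zero] at h
    refine h.congr' ?_
    filter_upwards [eventually_gt_atTop 0] with t ht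
    rw [one_add_div ht.ne', log_div (by positivity) ht.ne']
    ring
  rw [lintegral_ofReal_Ioi_of_hasDerivAt_of_nonneg hcont hderiv
    (fun t ht ↦ have := ha.trans ht; by positivity) hlim, one_add_div ha.ne',
    log_div (by positivity) ha.ne']
  ring_nf

theorem lintegral_Ioi_sqrt_mul_div_mul_add (hr : 0 < r) :
    ∫⁻ t in Ioi 0, ENNReal.ofReal (√t * (r / (t * (t + r)))) = ENNReal.ofReal (π * √r) := by
  set F : ℝ → ℝ := fun t ↦ 2 * √r * arctan (√t / √r)
  have hderiv : ∀ t ∈ Ioi (0 : ℝ), HasDerivAt F (√t * (r / (t * (t + r)))) t := by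
    intro t (ht : 0 < t)
    have : 0 < √t := sqrt_pos.mpr ht
    refine ((((hasDerivAt_sqrt ht.ne').div_const √r).arctan).const_mul
      (2 * √r)).congr_deriv ?_
    field_simp
    rw [sq_sqrt ht.le, sq_sqrt hr.le]
    ring
  have hcont : ContinuousWithinAt F (Ici 0) 0 := by
    unfold F
    fun_prop
  have hlim : Tendsto F atTop (𝓝 (π * √r)) := by
    have h := (tendsto_arctan_atTop.mono_right nhdsWithin_le_nhds).comp
      (tendsto_sqrt_atTop.atTop_div_const (sqrt_pos.mpr hr))
    rw [show π * √r = 2 * √r * (π / 2) by ring]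
    exact h.const_mul (2 * √r)
  rw [lintegral_ofReal_Ioi_of_hasDerivAt_of_nonneg hcont hderiv
    (fun t (ht : 0 < t) ↦ by positivity) hlim]
  simp [F]

end Kernel

section Counting

variable {lam : ℕ → ℝ} {φ : ℝ → ℝ}

-- The left-hand side is the counting function `#{k | lam k < t}`.
theorem tsum_indicator_Ioi_one_le
    (hcount : ∀ r : ℝ, 0 < r → ∀ s : Finset ℕ, (∀ k ∈ s, lam k ≤ r) → (s.card : ℝ) ≤ φ r)
    {t : ℝ} (ht : 0 < t) :
    ∑' k, (Ioi (lam k)).indicator (1 : ℝ → ℝ≥0∞) t ≤ ENNReal.ofReal (φ t) := by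
  classical
  refine tsum_le_of_sum_le' bot_le fun s ↦ ?_
  have hcard :
      ∑ k ∈ s, (Ioi (lam k)).indicator 1 t = ((s.filter (lam · < t)).card : ℝ≥0∞) := by
    simp [indicator_apply, Finset.sum_boole]
  rw [hcard, ← ENNReal.ofReal_natCast]
  exact ENNReal.ofReal_le_ofReal
    (hcount t ht _ fun k hk ↦ (Finset.mem_filter.1 hk).2.le)

theorem tsum_setLIntegral_Ioi_le (h0 : 0 ≤ lam 0) (hmin : ∀ k, lam 0 ≤ lam k)
    (hcount : ∀ r : ℝ, 0 < r → ∀ s : Finset ℕ, (∀ k ∈ s, lam k ≤ r) → (s.card : ℝ) ≤ φ r)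
    {g : ℝ → ℝ≥0∞} (hg : Measurable g) :
    ∑' k, ∫⁻ t in Ioi (lam k), g t ≤ ∫⁻ t in Ioi (lam 0), ENNReal.ofReal (φ t) * g t := by
  have hpoint : ∀ t, ∑' k, (Ioi (lam k)).indicator g t
      ≤ (Ioi (lam 0)).indicator (fun t ↦ ENNReal.ofReal (φ t) * g t) t := by
    intro t
    by_cases ht : lam 0 < t
    · have hsplit : ∀ k, (Ioi (lam k)).indicator g t = (Ioi (lam k)).indicator 1 t * g t :=
        fun k ↦ by simpa using Set.indicator_mul_left (Ioi (lam k)) 1 g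
      rw [indicator_of_mem (mem_Ioi.2 ht), tsum_congr hsplit, ENNReal.tsum_mul_right]
      exact mul_le_mul_left (tsum_indicator_Ioi_one_le hcount (h0.trans_lt ht)) _
    · have hzero : ∀ k, (Ioi (lam k)).indicator g t = 0 := fun k ↦
        indicator_of_notMem (fun hk : lam k < t ↦ ht ((hmin k).trans_lt hk)) _
      simp [hzero]
  calc ∑' k, ∫⁻ t in Ioi (lam k), g t
      = ∫⁻ t, ∑' k, (Ioi (lam k)).indicator g t := by
        simp_rw [← lintegral_indicator measurableSet_Ioi]
        exact (lintegral_tsum fun k ↦ (hg.indicator measurableSet_Ioi).aemeasurable).symm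
    _ ≤ ∫⁻ t, (Ioi (lam 0)).indicator (fun t ↦ ENNReal.ofReal (φ t) * g t) t :=
        lintegral_mono hpoint
    _ = ∫⁻ t in Ioi (lam 0), ENNReal.ofReal (φ t) * g t :=
        lintegral_indicator measurableSet_Ioi _

end Counting

theorem tsum_ofReal_log_one_add_div_le {lam : ℕ → ℝ} {A r : ℝ} (hr : 0 < r) (hA : 0 ≤ A)
    (h0 : 0 < lam 0) (hmin : ∀ k, lam 0 ≤ lam k)
    (hcount : ∀ ρ : ℝ, 0 < ρ → ∀ s : Finset ℕ, (∀ k ∈ s, lam k ≤ ρ) → (s.card : ℝ) ≤ A + √ρ) :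
    ∑' k, ENNReal.ofReal (log (1 + r / lam k)) ≤
      ENNReal.ofReal (π * √r + A * log (1 + r / lam 0)) := by
  have hg : Measurable fun t : ℝ ↦ ENNReal.ofReal (r / (t * (t + r))) := by fun_prop
  have hlog_nonneg : 0 ≤ log (1 + r / lam 0) :=
    log_nonneg (le_add_of_nonneg_right (by positivity))
  calc ∑' k, ENNReal.ofReal (log (1 + r / lam k))
      = ∑' k, ∫⁻ t in Ioi (lam k), ENNReal.ofReal (r / (t * (t + r))) := by
        simp_rw [lintegral_Ioi_div_mul_add hr (h0.trans_le (hmin _))]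
    _ ≤ ∫⁻ t in Ioi (lam 0), ENNReal.ofReal (A + √t) * ENNReal.ofReal (r / (t * (t + r))) :=
        tsum_setLIntegral_Ioi_le h0.le hmin hcount hg
    _ = ∫⁻ t in Ioi (lam 0), (ENNReal.ofReal A * ENNReal.ofReal (r / (t * (t + r))) +
          ENNReal.ofReal (√t * (r / (t * (t + r))))) :=
        lintegral_congr fun t ↦ by
          rw [ENNReal.ofReal_add hA (sqrt_nonneg t), add_mul, ENNReal.ofReal_mul (sqrt_nonneg t)]
    _ = ENNReal.ofReal A * (∫⁻ t in Ioi (lam 0), ENNReal.ofReal (r / (t * (t + r)))) +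
          ∫⁻ t in Ioi (lam 0), ENNReal.ofReal (√t * (r / (t * (t + r)))) := by
        rw [lintegral_add_left (hg.const_mul _), lintegral_const_mul _ hg]
    _ ≤ ENNReal.ofReal A * ENNReal.ofReal (log (1 + r / lam 0)) + ENNReal.ofReal (π * √r) := by
        rw [lintegral_Ioi_div_mul_add hr h0, ← lintegral_Ioi_sqrt_mul_div_mul_add hr]
        gcongr
    _ = ENNReal.ofReal (π * √r + A * log (1 + r / lam 0)) := by
        rw [← ENNReal.ofReal_mul hA, add_comm, ← ENNReal.ofReal_add (by positivity)
          (mul_nonneg hA hlog_nonneg)]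

theorem summable_and_tsum_le_of_tsum_ofReal_le {ι : Type*} {f : ι → ℝ} {c : ℝ}
    (hf : ∀ i, 0 ≤ f i) (hc : 0 ≤ c) (h : ∑' i, ENNReal.ofReal (f i) ≤ ENNReal.ofReal c) :
    Summable f ∧ ∑' i, f i ≤ c := by
  have hs : Summable f :=
    (ENNReal.summable_toReal (ne_top_of_le_ne_top ENNReal.ofReal_ne_top h)).congr
      fun i ↦ ENNReal.toReal_ofReal (hf i)
  refine ⟨hs, ?_⟩
  rwa [← ENNReal.ofReal_le_ofReal_iff hc, ENNReal.ofReal_tsum_of_nonneg hf hs]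

theorem summable_of_summable_log_one_add {ι : Type*} {f : ι → ℝ} {C : ℝ} (hf : ∀ i, 0 ≤ f i)
    (hC : ∀ i, f i ≤ C) (h : Summable fun i ↦ log (1 + f i)) : Summable f := by
  refine (h.mul_left ((C + 2) / 2)).of_nonneg_of_le hf fun i ↦ ?_
  have hlog := le_log_one_add_of_nonneg (hf i)
  rw [div_le_iff₀ (by linarith [hf i])] at hlog
  nlinarith [hC i, log_nonneg (le_add_of_nonneg_right (hf i))]

theorem log_norm_tprod_one_add_le {ι R : Type*} [NormedCommRing R] [NormOneClass R]
    [CompleteSpace R] {f : ι → R} (hf : Summable (‖f ·‖)) :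
    log ‖∏' i, (1 + f i)‖ ≤ ∑' i, log (1 + ‖f i‖) := by
  have hlog : Summable fun i ↦ log (1 + ‖f i‖) := Real.summable_log_one_add_of_summable hf
  have hlog_nonneg : ∀ i, 0 ≤ log (1 + ‖f i‖) := fun i ↦
    log_nonneg (le_add_of_nonneg_right (norm_nonneg _))
  have hbound : ‖∏' i, (1 + f i)‖ ≤ exp (∑' i, log (1 + ‖f i‖)) := by
    refine le_of_tendsto' ((continuous_norm.tendsto _).comp
      (multipliable_one_add_of_summable hf).hasProd) fun s ↦ ?_
    calc ‖∏ i ∈ s, (1 + f i)‖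
        ≤ ∏ i ∈ s, ‖1 + f i‖ := Finset.norm_prod_le _ _
      _ ≤ ∏ i ∈ s, (1 + ‖f i‖) := Finset.prod_le_prod (fun _ _ ↦ norm_nonneg _)
          fun i _ ↦ (norm_add_le _ _).trans_eq (by rw [norm_one])
      _ = exp (∑ i ∈ s, log (1 + ‖f i‖)) := by
          rw [exp_sum]
          exact Finset.prod_congr rfl fun i _ ↦ (exp_log (by positivity)).symm
      _ ≤ exp (∑' i, log (1 + ‖f i‖)) :=
          exp_le_exp.2 (hlog.sum_le_tsum s fun i _ ↦ hlog_nonneg i)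
  rcases (norm_nonneg (∏' i, (1 + f i))).eq_or_lt with h | h
  · rw [← h, log_zero]
    exact tsum_nonneg hlog_nonneg
  · exact (log_le_iff_le_exp h).2 hbound

theorem stmt3 (A : ℝ) (hA : 0 < A) (lam : ℕ → ℝ) (hpos : ∀ k, 0 < lam k)
    (hmin : ∀ k, lam 0 ≤ lam k)
    (hcount : ∀ r : ℝ, 0 < r → ∀ s : Finset ℕ, (∀ k ∈ s, lam k ≤ r) →
      (s.card : ℝ) ≤ A + Real.sqrt r)
    (z : ℂ) :
    Multipliable (fun k : ℕ => 1 - z / (lam k : ℂ)) ∧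
    Real.log ‖∏' k : ℕ, (1 - z / (lam k : ℂ))‖ ≤
      Real.pi * Real.sqrt ‖z‖ + A * Real.log (1 + ‖z‖ / lam 0) := by
  rcases eq_or_ne z 0 with rfl | hz
  · simp
  have hr : 0 < ‖z‖ := norm_pos_iff.2 hz
  have hnorm : ∀ k, ‖-(z / (lam k : ℂ))‖ = ‖z‖ / lam k := fun k ↦ by
    rw [norm_neg, norm_div, Complex.norm_real, Real.norm_of_nonneg (hpos k).le]
  obtain ⟨hlog, hle⟩ := summable_and_tsum_le_of_tsum_ofReal_le
    (fun k ↦ log_nonneg (le_add_of_nonneg_right (div_nonneg hr.le (hpos k).le)))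
    (add_nonneg (by positivity) (mul_nonneg hA.le
      (log_nonneg (le_add_of_nonneg_right (div_nonneg hr.le (hpos 0).le)))))
    (tsum_ofReal_log_one_add_div_le hr hA.le (hpos 0) hmin hcount)
  have hsum : Summable fun k ↦ ‖-(z / (lam k : ℂ))‖ := by
    simp_rw [hnorm]
    exact summable_of_summable_log_one_add (fun k ↦ div_nonneg hr.le (hpos k).le)
      (fun k ↦ div_le_div_of_nonneg_left hr.le (hpos 0) (hmin k)) hlog
  simp_rw [sub_eq_add_neg]
  refine ⟨multipliable_one_add_of_summable hsum, ?_⟩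
  calc log ‖∏' k, (1 + -(z / (lam k : ℂ)))‖
      ≤ ∑' k, log (1 + ‖-(z / (lam k : ℂ))‖) := log_norm_tprod_one_add_le hsum
    _ = ∑' k, log (1 + ‖z‖ / lam k) := by simp_rw [hnorm]
    _ ≤ π * √‖z‖ + A * log (1 + ‖z‖ / lam 0) := hle
end

section
/- ∫₀¹ f'(θ)/√θ dθ − f(1) = − ∑_{k≥1} (1/(k(4k−1)))·ζ(2k)/π^{2k}, where f(θ) = ln(sin θ/θ); in particular this series Σ* = ∑_{k≥1} ζ(2k)/(k(4k−1)π^{2k}) converges and is positive. -/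
/-!
Taking logarithms in Euler's product `sin x / x = ∏ₙ (1 - x² / (n² π²))` and expanding every
`-log (1 - y) = ∑ₘ yᵐ / m` gives a double series of nonnegative terms; summing it in the other
order yields `-log (sin x / x) = ∑ₖ ζ(2k) / k · (x / π)^(2k)` for `0 < |x| < π`. On `(0, π)` this
series may be differentiated termwise, and on `(0, 1)` the resulting series for `f'(θ) / √θ` may
be integrated termwise, both because its coefficients are dominated by a geometric sequence.
Since `∫₀¹ θ^(2k - 3/2) dθ = 2 / (4k - 1)`, the integral is `-∑ₖ 4 ζ(2k) / ((4k - 1) π^(2k))`, and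
the claim follows from `1 / k - 4 / (4k - 1) = -1 / (k (4k - 1))`.
-/

open Real MeasureTheory Filter Set Topology

-- `ζ(2k + 2)`: the index is shifted by one so that all series below run over `ℕ`.
noncomputable def zetaEven (k : ℕ) : ℝ := (riemannZeta (2 * (k + 1))).re

theorem hasSum_re_riemannZeta_nat {s : ℕ} (hs : 1 < s) :
    HasSum (fun n : ℕ => 1 / ((n : ℝ) + 1) ^ s) (riemannZeta s).re := by
  have hsum : Summable (fun n : ℕ => 1 / ((n : ℝ) + 1) ^ s) := by
    simpa using (summable_nat_add_iff 1).mpr (Real.summable_one_div_nat_pow.mpr hs)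
  have hζ : riemannZeta s = ((∑' n : ℕ, 1 / ((n : ℝ) + 1) ^ s : ℝ) : ℂ) := by
    rw [zeta_eq_tsum_one_div_nat_add_one_cpow (by simpa using hs), Complex.ofReal_tsum]
    push_cast
    simp only [Complex.cpow_natCast]
  rw [hζ, Complex.ofReal_re]
  exact hsum.hasSum

theorem hasSum_zetaEven (k : ℕ) :
    HasSum (fun n : ℕ => 1 / ((n : ℝ) + 1) ^ (2 * (k + 1))) (zetaEven k) := by
  simpa [zetaEven] using hasSum_re_riemannZeta_nat (s := 2 * (k + 1)) (by omega)

theorem zetaEven_pos (k : ℕ) : 0 < zetaEven k := by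
  rw [← (hasSum_zetaEven k).tsum_eq]
  exact (hasSum_zetaEven k).summable.tsum_pos (fun n => by positivity) 0 (by norm_num)

theorem zetaEven_le (k : ℕ) : zetaEven k ≤ π ^ 2 / 6 := by
  have hζ2 : HasSum (fun n : ℕ => 1 / ((n : ℝ) + 1) ^ 2) (π ^ 2 / 6) := by
    simpa using (hasSum_nat_add_iff' 1).mpr hasSum_zeta_two
  refine hasSum_le (fun n => ?_) (hasSum_zetaEven k) hζ2
  gcongr
  · simp
  · omega

theorem sq_div_pi_div_sq_mem_Ico {x : ℝ} (hx : |x| < π) (j : ℕ) :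
    (x / π) ^ 2 / ((j : ℝ) + 1) ^ 2 ∈ Ico 0 1 := by
  have hq : (x / π) ^ 2 < 1 := by
    rw [sq_lt_one_iff_abs_lt_one, abs_div, abs_of_pos pi_pos]
    exact (div_lt_one pi_pos).mpr hx
  have : (x / π) ^ 2 / ((j : ℝ) + 1) ^ 2 ≤ (x / π) ^ 2 :=
    div_le_self (sq_nonneg _) (one_le_pow₀ (by simp))
  exact ⟨by positivity, by linarith⟩

theorem hasSum_neg_log_one_sub_sq_div {x : ℝ} (hx₀ : x ≠ 0) (hx : |x| < π) :
    HasSum (fun j : ℕ => -log (1 - (x / π) ^ 2 / ((j : ℝ) + 1) ^ 2)) (-log (sin x / x)) := by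
  set y : ℕ → ℝ := fun j => (x / π) ^ 2 / ((j : ℝ) + 1) ^ 2
  have hy := sq_div_pi_div_sq_mem_Ico hx
  have hprod : Tendsto (fun N => ∏ j ∈ Finset.range N, (1 - y j)) atTop (𝓝 (sin x / x)) := by
    have h := (Real.tendsto_euler_sin_prod (x / π)).div_const x
    rw [mul_div_cancel₀ x pi_ne_zero] at h
    refine h.congr fun N => ?_
    rw [mul_comm, mul_div_assoc, div_self hx₀, mul_one]
  have hsin : sin x / x ≠ 0 := by
    obtain ⟨hl, hr⟩ := abs_lt.mp hx
    exact div_ne_zero ((sin_eq_zero_iff_of_lt_of_lt hl hr).not.mpr hx₀) hx₀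
  have hlog : Tendsto (fun N => ∑ j ∈ Finset.range N, -log (1 - y j)) atTop
      (𝓝 (-log (sin x / x))) := by
    refine ((continuousAt_log hsin).tendsto.comp hprod).neg.congr fun N => ?_
    rw [Function.comp_apply, log_prod fun j _ => by linarith [(hy j).2], Finset.sum_neg_distrib]
  refine (hasSum_iff_tendsto_nat_of_nonneg (fun j => ?_) _).mpr hlog
  exact neg_nonneg.mpr (log_nonpos (by linarith [(hy j).2]) (by linarith [(hy j).1]))

theorem hasSum_tsum_swap_of_nonneg {β γ : Type*} {f : β → γ → ℝ} {g : β → ℝ} {a : ℝ}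
    (hf : ∀ b c, 0 ≤ f b c) (hrow : ∀ b, HasSum (f b) (g b)) (hg : HasSum g a) :
    HasSum (fun c => ∑' b, f b c) a := by
  have hF : Summable (Function.uncurry f) :=
    (summable_prod_of_nonneg fun p => hf p.1 p.2).mpr
      ⟨fun b => (hrow b).summable, hg.summable.congr fun b => ((hrow b).tsum_eq).symm⟩
  have hFa : HasSum (Function.uncurry f) a := by
    rw [hg.unique (hF.hasSum.prod_fiberwise hrow)]
    exact hF.hasSum
  exact ((Equiv.prodComm γ β).hasSum_iff.mpr hFa).prod_fiberwise
    fun c => (hF.prod_symm.prod_factor c).hasSum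

theorem hasSum_neg_log_sin_div {x : ℝ} (hx₀ : x ≠ 0) (hx : |x| < π) :
    HasSum (fun k : ℕ => zetaEven k / (k + 1) * (x / π) ^ (2 * (k + 1))) (-log (sin x / x)) := by
  have hy := sq_div_pi_div_sq_mem_Ico hx
  have hcol (m : ℕ) : HasSum (fun j : ℕ => ((x / π) ^ 2 / ((j : ℝ) + 1) ^ 2) ^ (m + 1) / (m + 1))
      (zetaEven m / (m + 1) * (x / π) ^ (2 * (m + 1))) := by
    have h := (hasSum_zetaEven m).mul_left ((x / π) ^ (2 * (m + 1)) / (m + 1))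
    rw [show (x / π) ^ (2 * (m + 1)) / (m + 1) * zetaEven m =
      zetaEven m / (m + 1) * (x / π) ^ (2 * (m + 1)) by ring] at h
    refine h.congr_fun fun j => ?_
    simp only [div_pow, ← pow_mul]
    ring
  refine (hasSum_tsum_swap_of_nonneg (fun j m => by have := (hy j).1; positivity)
    (fun j => hasSum_pow_div_log_of_abs_lt_one (by rw [abs_of_nonneg (hy j).1]; exact (hy j).2))
    (hasSum_neg_log_one_sub_sq_div hx₀ hx)).congr_fun fun m => ?_
  exact (hcol m).tsum_eq.symm

theorem hasDerivAt_mul_div_pi_pow (c : ℝ) (k : ℕ) (y : ℝ) :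
    HasDerivAt (fun t => c / (k + 1) * (t / π) ^ (2 * (k + 1)))
      (2 * c / π * (y / π) ^ (2 * k + 1)) y := by
  have h := (((hasDerivAt_id y).div_const π).pow (2 * (k + 1))).const_mul (c / (k + 1))
  refine h.congr_deriv ?_
  rw [show 2 * (k + 1) - 1 = 2 * k + 1 by omega]
  simp only [id_eq]
  push_cast
  field_simp

theorem hasSum_deriv_log_sin_div {θ : ℝ} (hθ₀ : 0 < θ) (hθ : θ < π) :
    HasSum (fun k : ℕ => -(2 * zetaEven k / π * (θ / π) ^ (2 * k + 1)))
      (deriv (fun t => log (sin t / t)) θ) := by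
  obtain ⟨r, hθr, hrπ⟩ : ∃ r, θ < r ∧ r < π := ⟨(θ + π) / 2, by linarith, by linarith⟩
  have hr₀ : 0 < r := by linarith
  have hr : r / π < 1 := (div_lt_one pi_pos).mpr hrπ
  have hu : Summable fun k : ℕ => π / 3 * (r / π) * ((r / π) ^ 2) ^ k :=
    (summable_geometric_of_lt_one (by positivity)
      (pow_lt_one₀ (by positivity) hr two_ne_zero)).mul_left _
  have hbound : ∀ (k : ℕ), ∀ y ∈ Ioo 0 r,
      ‖-(2 * zetaEven k / π * (y / π) ^ (2 * k + 1))‖ ≤ π / 3 * (r / π) * ((r / π) ^ 2) ^ k := by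
    intro k y hy
    have hζ := zetaEven_pos k
    have hy₀ := hy.1
    have hc : 2 * zetaEven k / π ≤ π / 3 := by
      rw [div_le_iff₀ pi_pos]
      nlinarith [zetaEven_le k]
    have hyr : y / π ≤ r / π := by gcongr; exact hy.2.le
    rw [norm_neg, Real.norm_of_nonneg (by positivity), pow_succ', pow_mul, mul_assoc (π / 3)]
    gcongr
  replace hθr : θ ∈ Ioo 0 r := ⟨hθ₀, hθr⟩
  have hD := hasDerivAt_tsum_of_isPreconnected hu isOpen_Ioo (convex_Ioo 0 r).isPreconnected
    (fun k y _ => (hasDerivAt_mul_div_pi_pow (zetaEven k) k y).neg) hbound hθr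
    (hasSum_neg_log_sin_div hθ₀.ne' (by rwa [abs_of_pos hθ₀])).summable.neg hθr
  have heq : (fun t => log (sin t / t)) =ᶠ[𝓝 θ]
      fun t => ∑' k : ℕ, -(zetaEven k / (k + 1) * (t / π) ^ (2 * (k + 1))) := by
    filter_upwards [isOpen_Ioo.mem_nhds (show θ ∈ Ioo 0 π from ⟨hθ₀, hθ⟩)] with t ht
    rw [tsum_neg, (hasSum_neg_log_sin_div ht.1.ne' (by rw [abs_of_pos ht.1]; exact ht.2)).tsum_eq,
      neg_neg]
  rw [(hD.congr_of_eventuallyEq heq).deriv]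
  exact (Summable.of_norm_bounded hu fun k => hbound k θ hθr).hasSum

theorem integral_pow_mul_sqrt (n : ℕ) : ∫ θ in Ioo (0 : ℝ) 1, θ ^ n * √θ = 2 / (2 * n + 3) := by
  rw [← integral_Ioc_eq_integral_Ioo, ← intervalIntegral.integral_of_le zero_le_one]
  have h : EqOn (fun θ : ℝ => θ ^ n * √θ) (fun θ => θ ^ ((n : ℝ) + 1 / 2)) (uIcc 0 1) := by
    intro θ hθ
    have hθ₀ : 0 ≤ θ := by simpa using hθ.1
    show θ ^ n * √θ = θ ^ ((n : ℝ) + 1 / 2)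
    rw [rpow_add' hθ₀ (by positivity), rpow_natCast, sqrt_eq_rpow]
  have hn : (-1 : ℝ) < n + 1 / 2 := by linarith [n.cast_nonneg (α := ℝ)]
  rw [intervalIntegral.integral_congr h, integral_rpow (Or.inl hn), one_rpow,
    zero_rpow (by positivity)]
  field_simp
  ring

theorem two_mul_zetaEven_div_pi_pow_le (k : ℕ) :
    2 * zetaEven k / π ^ (2 * (k + 1)) ≤ (π ^ 2)⁻¹ ^ k := by
  have h : 2 * zetaEven k ≤ π ^ 2 := by linarith [zetaEven_le k, sq_nonneg π]
  rw [pow_mul, pow_succ', inv_pow, ← one_div, div_le_div_iff₀ (by positivity) (by positivity),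
    one_mul]
  exact mul_le_mul_of_nonneg_right h (by positivity)

theorem hasSum_deriv_log_sin_div_div_sqrt {θ : ℝ} (hθ₀ : 0 < θ) (hθ : θ < π) :
    HasSum (fun k : ℕ => -(2 * zetaEven k / π ^ (2 * (k + 1))) * (θ ^ (2 * k) * √θ))
      (deriv (fun t => log (sin t / t)) θ / √θ) := by
  refine ((hasSum_deriv_log_sin_div hθ₀ hθ).div_const √θ).congr_fun fun k => ?_
  have hss : √θ * √θ = θ := mul_self_sqrt hθ₀.le
  rw [eq_div_iff (sqrt_pos.mpr hθ₀).ne']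
  linear_combination (-2 * zetaEven k / π ^ (2 * (k + 1)) * θ ^ (2 * k)) * hss

theorem summable_integral_norm_deriv_log_sin_div_div_sqrt_terms :
    Summable fun k : ℕ =>
      ∫ θ in Ioo (0 : ℝ) 1, ‖-(2 * zetaEven k / π ^ (2 * (k + 1))) * (θ ^ (2 * k) * √θ)‖ := by
  have hπ : (π ^ 2)⁻¹ < 1 := inv_lt_one_of_one_lt₀ (by nlinarith [pi_gt_three])
  refine Summable.of_nonneg_of_le (fun k => integral_nonneg fun _ => norm_nonneg _) (fun k => ?_)
    (summable_geometric_of_lt_one (by positivity) hπ)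
  have hζ := zetaEven_pos k
  have hnorm (θ : ℝ) : ‖-(2 * zetaEven k / π ^ (2 * (k + 1))) * (θ ^ (2 * k) * √θ)‖ =
      2 * zetaEven k / π ^ (2 * (k + 1)) * (θ ^ (2 * k) * √θ) := by
    rw [norm_mul, norm_neg, Real.norm_of_nonneg (by positivity),
      Real.norm_of_nonneg (mul_nonneg (Even.pow_nonneg (even_two_mul k) _) (sqrt_nonneg _))]
  have hle : 2 / (2 * ((2 * k : ℕ) : ℝ) + 3) ≤ 1 := by
    rw [div_le_one (by positivity)]
    linarith [(2 * k : ℕ).cast_nonneg (α := ℝ)]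
  simp_rw [hnorm]
  rw [integral_const_mul, integral_pow_mul_sqrt]
  exact (mul_le_of_le_one_right (by positivity) hle).trans (two_mul_zetaEven_div_pi_pow_le k)

theorem hasSum_integral_deriv_log_sin_div_div_sqrt :
    HasSum (fun k : ℕ => -(4 * zetaEven k / ((4 * k + 3) * π ^ (2 * (k + 1)))))
      (∫ θ in Ioo (0 : ℝ) 1, deriv (fun t => log (sin t / t)) θ / √θ) := by
  rw [setIntegral_congr_fun measurableSet_Ioo fun θ hθ =>
    (hasSum_deriv_log_sin_div_div_sqrt hθ.1 (hθ.2.trans (by linarith [pi_gt_three]))).tsum_eq.symm]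
  refine (hasSum_integral_of_summable_integral_norm (fun k => ?_)
    summable_integral_norm_deriv_log_sin_div_div_sqrt_terms).congr_fun fun k => ?_
  · exact (Continuous.integrableOn_Icc (by fun_prop)).mono_set Ioo_subset_Icc_self
  · rw [integral_const_mul, integral_pow_mul_sqrt]
    push_cast
    field_simp
    ring

theorem stmt9 :
    Summable (fun k : ℕ =>
      (riemannZeta (2 * (k + 1))).re / ((k + 1) * (4 * (k + 1) - 1) * Real.pi ^ (2 * (k + 1)))) ∧
    0 < ∑' k : ℕ,
      (riemannZeta (2 * (k + 1))).re / ((k + 1) * (4 * (k + 1) - 1) * Real.pi ^ (2 * (k + 1))) ∧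
    (∫ θ in Set.Ioo (0:ℝ) 1, deriv (fun t => Real.log (Real.sin t / t)) θ / Real.sqrt θ)
        - Real.log (Real.sin 1 / 1) =
      -∑' k : ℕ,
        (riemannZeta (2 * (k + 1))).re / ((k + 1) * (4 * (k + 1) - 1) * Real.pi ^ (2 * (k + 1))) := by
  have hlog := hasSum_neg_log_sin_div one_ne_zero (by rw [abs_one]; linarith [pi_gt_three])
  have hT : HasSum (fun k : ℕ => zetaEven k / ((k + 1) * (4 * (k + 1) - 1) * π ^ (2 * (k + 1))))
      (-((∫ θ in Ioo (0 : ℝ) 1, deriv (fun t => log (sin t / t)) θ / √θ) - log (sin 1 / 1))) := by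
    rw [sub_eq_add_neg]
    refine (hasSum_integral_deriv_log_sin_div_div_sqrt.add hlog).neg.congr_fun fun k => ?_
    rw [one_div_pow, show 4 * ((k : ℝ) + 1) - 1 = 4 * k + 3 by ring]
    field_simp
    ring
  have hpos (k : ℕ) : 0 < zetaEven k / ((k + 1) * (4 * (k + 1) - 1) * π ^ (2 * (k + 1))) := by
    have : (0 : ℝ) < 4 * (k + 1) - 1 := by linarith [k.cast_nonneg (α := ℝ)]
    exact div_pos (zetaEven_pos k) (mul_pos (mul_pos (by positivity) this) (by positivity))
  exact ⟨hT.summable, hT.summable.tsum_pos (fun k => (hpos k).le) 0 (hpos 0),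
    neg_eq_iff_eq_neg.mp hT.tsum_eq.symm⟩
end
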